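/- Let (g_m) be a sequence of nonnegative functions on ℝ and let ε_m → 0 be such that for each compact K ⊂ (0,∞) there is c_K > 0 with min(g_m, c_K) → c_K uniformly on K. Suppose u_m: (0,t) → ℝ are measurable, u_m → u a.e. on (0,t), u ∈ L²((0,t)), and ess sup_{(0,t)} u > 0. Then exp(-(1/ε_m) ∫₀^t g_m(u_m(s)) ds) → 0 as m → ∞. -/

import Mathlib

/-!
On a set `A ⊆ (0,t)` of positive measure where `λ ≤ u ≤ M`, the points `u_m(s)` eventually
lie in the compact `K = [λ/2, M+1]`, so `min (g_m (u_m s)) c_K → c_K` pointwise a.e. on `A`.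
Dominated convergence then bounds `∫₀ᵗ g_m(u_m)` below by `c_K |A| / 2` for large `m`, and
dividing by `ε_m → 0⁺` sends the exponent to `-∞`.
-/

open MeasureTheory Set Filter Topology

theorem Real.tendsto_exp_neg_one_div_mul_of_eventually_ge {ι : Type*} {l : Filter ι}
    {ε I : ι → ℝ} (hε : Tendsto ε l (𝓝[>] 0)) {δ : ℝ} (hδ : 0 < δ) (hI : ∀ᶠ m in l, δ ≤ I m) :
    Tendsto (fun m => Real.exp (-(1 / ε m) * I m)) l (𝓝 0) := by
  have hinv : Tendsto (fun m => 1 / ε m * δ) l atTop := by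
    simpa [one_div] using hε.inv_tendsto_nhdsGT_zero.atTop_mul_const hδ
  have hprod : Tendsto (fun m => 1 / ε m * I m) l atTop := by
    refine tendsto_atTop_mono' l ?_ hinv
    filter_upwards [hI, hε self_mem_nhdsWithin] with m hm hεm
    exact mul_le_mul_of_nonneg_left hm (one_div_pos.2 hεm).le
  simpa only [neg_mul, Function.comp_def] using
    Real.tendsto_exp_atBot.comp (tendsto_neg_atTop_atBot.comp hprod)

theorem MeasureTheory.exists_nat_measure_pos_of_measure_pos {α : Type*} [MeasurableSpace α]
    {μ : Measure α} {U : α → ℝ} {lam : ℝ} (h : 0 < μ {s | lam ≤ U s}) :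
    ∃ M : ℕ, 0 < μ {s | lam ≤ U s ∧ U s ≤ M} := by
  by_contra! h0
  have hcover : {s | lam ≤ U s} ⊆ ⋃ M : ℕ, {s | lam ≤ U s ∧ U s ≤ M} := fun s hs =>
    mem_iUnion.2 ⟨⌈U s⌉₊, hs, Nat.le_ceil _⟩
  exact h.ne' <| measure_mono_null hcover <|
    measure_iUnion_null fun M => nonpos_iff_eq_zero.1 (h0 M)

theorem MeasureTheory.exists_pos_eventually_le_integral_of_tendsto_min {α : Type*}
    [MeasurableSpace α] {μ : Measure α} {f : ℕ → α → ℝ} {A : Set α} {c : ℝ} (hc : 0 < c)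
    (hA : 0 < μ A) (hA_fin : μ A ≠ ⊤) (hf_nonneg : ∀ m, 0 ≤ᵐ[μ] f m)
    (hf_int : ∀ m, Integrable (f m) μ)
    (hlim : ∀ᵐ s ∂μ.restrict A, Tendsto (fun m => min (f m s) c) atTop (𝓝 c)) :
    ∃ δ > 0, ∀ᶠ m in atTop, δ ≤ ∫ s, f m s ∂μ := by
  have : IsFiniteMeasure (μ.restrict A) := isFiniteMeasure_restrict.2 hA_fin
  have hmin_nonneg : ∀ m, 0 ≤ᵐ[μ.restrict A] fun s => min (f m s) c := fun m => by
    filter_upwards [ae_restrict_of_ae (hf_nonneg m)] with s hs using le_min hs hc.le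
  have hconv : Tendsto (fun m => ∫ s in A, min (f m s) c ∂μ) atTop (𝓝 (μ.real A * c)) := by
    have := tendsto_integral_of_dominated_convergence (μ := μ.restrict A)
      (F := fun m s => min (f m s) c) (fun _ => c)
      (fun m => ((hf_int m).aestronglyMeasurable.restrict.inf aestronglyMeasurable_const :
        AEStronglyMeasurable (fun s => min (f m s) c) _))
      (integrable_const c)
      (fun m => by
        filter_upwards [hmin_nonneg m] with s hs
        rw [Real.norm_of_nonneg hs]
        exact min_le_right _ _)
      hlim
    simpa [integral_const, Measure.real] using this
  have hlim_pos : 0 < μ.real A * c := mul_pos (ENNReal.toReal_pos hA.ne' hA_fin) hc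
  refine ⟨μ.real A * c / 2, half_pos hlim_pos, ?_⟩
  filter_upwards [hconv.eventually_const_le (half_lt_self hlim_pos)] with m hm
  calc μ.real A * c / 2 ≤ ∫ s in A, min (f m s) c ∂μ := hm
    _ ≤ ∫ s in A, f m s ∂μ :=
        integral_mono_of_nonneg (hmin_nonneg m) (hf_int m).restrict
          (ae_of_all _ fun s => min_le_left _ _)
    _ ≤ ∫ s, f m s ∂μ := setIntegral_le_integral (hf_int m) (hf_nonneg m)

theorem stmt9_general (g : ℕ → ℝ → ℝ) (ε : ℕ → ℝ)
    (hεpos : ∀ m, 0 < ε m) (hε : Tendsto ε atTop (nhds 0))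
    (hg : ∀ m z, 0 ≤ g m z)
    (hunif : ∀ K : Set ℝ, IsCompact K → K ⊆ Ioi 0 → ∃ c > (0:ℝ),
      TendstoUniformlyOn (fun m z => min (g m z) c) (fun _ => c) atTop K)
    (t : ℝ) (ht : 0 < t)
    (u : ℕ → ℝ → ℝ) (U : ℝ → ℝ)
    (hmeas : ∀ m, Measurable (u m))
    (hae : ∀ᵐ s ∂(volume.restrict (Ioo 0 t)),
      Tendsto (fun m => u m s) atTop (nhds (U s)))
    (hess : ∃ lam > (0:ℝ), 0 < volume {s ∈ Ioo 0 t | lam ≤ U s})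
    (hint : ∀ m, IntervalIntegrable (fun s => g m (u m s)) volume 0 t) :
    Tendsto (fun m => Real.exp (-(1/ε m) * ∫ s in (0:ℝ)..t, g m (u m s)))
      atTop (nhds 0) := by
  set μ := volume.restrict (Ioo (0:ℝ) t)
  obtain ⟨lam, hlam, hE⟩ := hess
  have hEμ : 0 < μ {s | lam ≤ U s} := hE.trans_le <|
    (measure_mono fun s hs => (⟨hs.2, hs.1⟩ : s ∈ {s | lam ≤ U s} ∩ Ioo 0 t)).trans
      (Measure.le_restrict_apply _ _)
  obtain ⟨M, hA⟩ := exists_nat_measure_pos_of_measure_pos hEμ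
  obtain ⟨c, hc, hc_unif⟩ := hunif (Icc (lam / 2) (M + 1)) isCompact_Icc
    fun z hz => (half_pos hlam).trans_le hz.1
  have hU : AEMeasurable U μ :=
    aemeasurable_of_tendsto_metrizable_ae' (fun m => (hmeas m).aemeasurable) hae
  have hA_meas : NullMeasurableSet {s | lam ≤ U s ∧ U s ≤ M} μ :=
    (nullMeasurableSet_le aemeasurable_const hU).inter (nullMeasurableSet_le hU aemeasurable_const)
  have hlim : ∀ᵐ s ∂μ.restrict {s | lam ≤ U s ∧ U s ≤ M},
      Tendsto (fun m => min (g m (u m s)) c) atTop (𝓝 c) := by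
    filter_upwards [ae_restrict_mem₀ hA_meas, ae_restrict_of_ae hae] with s hs hs_lim
    have hK : Icc (lam / 2) (M + 1) ∈ 𝓝 (U s) :=
      Icc_mem_nhds (by linarith [hs.1]) (by linarith [hs.2])
    exact hc_unif.tendsto_comp continuousWithinAt_const
      (tendsto_nhdsWithin_iff.2 ⟨hs_lim, hs_lim hK⟩)
  obtain ⟨δ, hδ, hδ_le⟩ := exists_pos_eventually_le_integral_of_tendsto_min hc hA
    (measure_ne_top _ _) (fun m => ae_of_all _ (hg m <| u m ·))
    (fun m => (hint m).1.mono_set Ioo_subset_Ioc_self) hlim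
  refine Real.tendsto_exp_neg_one_div_mul_of_eventually_ge
    (tendsto_nhdsWithin_iff.2 ⟨hε, .of_forall hεpos⟩) hδ ?_
  simpa only [intervalIntegral.integral_of_le ht.le, integral_Ioc_eq_integral_Ioo] using hδ_le

/-- where the essential supremum of the limit temperature is positive, the
exponential factor exp(-(1/ε_m)∫₀ᵗ g_m(u_m)) tends to 0. -/
theorem stmt9 (g : ℕ → ℝ → ℝ) (ε : ℕ → ℝ)
    (hεpos : ∀ m, 0 < ε m) (hε : Tendsto ε atTop (nhds 0))
    (hg : ∀ m z, 0 ≤ g m z)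
    (hunif : ∀ K : Set ℝ, IsCompact K → K ⊆ Ioi 0 → ∃ c > (0:ℝ),
      TendstoUniformlyOn (fun m z => min (g m z) c) (fun _ => c) atTop K)
    (t : ℝ) (ht : 0 < t)
    (u : ℕ → ℝ → ℝ) (U : ℝ → ℝ)
    (hmeas : ∀ m, Measurable (u m))
    (hae : ∀ᵐ s ∂(volume.restrict (Ioo 0 t)),
      Tendsto (fun m => u m s) atTop (nhds (U s)))
    (hU : MemLp U 2 (volume.restrict (Ioo 0 t)))
    (hess : ∃ lam > (0:ℝ), 0 < volume {s ∈ Ioo 0 t | lam ≤ U s})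
    (hint : ∀ m, IntervalIntegrable (fun s => g m (u m s)) volume 0 t) :
    Tendsto (fun m => Real.exp (-(1/ε m) * ∫ s in (0:ℝ)..t, g m (u m s)))
      atTop (nhds 0) :=
  stmt9_general g ε hεpos hε hg hunif t ht u U hmeas hae hess hint
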